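/- Explicit presentation transfer: let R be a commutative ring, X and X̃ types, P an R-algebra, π : FreeAlgebra R X → P and π̃ : FreeAlgebra R X̃ → P surjective R-algebra homomorphisms, and φ : FreeAlgebra R X → FreeAlgebra R X̃, φ̃ : FreeAlgebra R X̃ → FreeAlgebra R X R-algebra homomorphisms satisfying π̃ ∘ φ = π and π ∘ φ̃ = π̃. If the kernel of π̃ equals the two-sided ideal generated by a subset R̃ ⊆ FreeAlgebra R X̃, then the kernel of π equals the two-sided ideal generated by the set φ̃(R̃) ∪ { ι(x) - φ̃(φ(ι(x))) : x ∈ X }. -/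

import Mathlib

/-!
Write `I` for the span of `φ̃(R̃) ∪ {ι x - φ̃φ(ι x)}`. Both kinds of generators lie in `ker π`,
so `I ≤ ker π`. Conversely, `id` and `φ̃ ∘ φ` agree modulo `I` on the generators `ι x`, hence on
all of `FreeAlgebra R X`; so for `a ∈ ker π` we have `φ a ∈ ker π̃ = span R̃`, whence
`φ̃ (φ a) ∈ span (φ̃ '' R̃) ≤ I`, and `a = (a - φ̃ (φ a)) + φ̃ (φ a) ∈ I`.
-/

namespace TwoSidedIdeal

variable {A B P : Type*} [Ring A] [Ring B] [Ring P]

theorem span_le_comap_span_image (f : A →+* B) (s : Set A) :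
    span s ≤ comap f (span (f '' s)) :=
  span_le.2 fun a ha => (mem_comap f).2 (subset_span ⟨a, ha, rfl⟩)

theorem ker_eq_of_le_of_sub_mem {π : A →+* P} {πt : B →+* P} {φ : A →+* B} {φt : B →+* A}
    (hφ : ∀ a, πt (φ a) = π a) {Rt : Set B} (hker : ker πt = span Rt) {I : TwoSidedIdeal A}
    (hIπ : I ≤ ker π) (hRt : φt '' Rt ⊆ I) (hsub : ∀ a, a - φt (φ a) ∈ I) :
    ker π = I := by
  refine le_antisymm (fun a ha => ?_) hIπ
  have hφa : φ a ∈ span Rt := by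
    rw [← hker, mem_ker, hφ]
    exact (mem_ker π).1 ha
  have hφtφa : φt (φ a) ∈ I :=
    span_le.2 hRt ((mem_comap φt).1 (span_le_comap_span_image φt Rt hφa))
  simpa using I.add_mem (hsub a) hφtφa

end TwoSidedIdeal

namespace FreeAlgebra

theorem sub_mem_of_forall_ι_sub_mem {R X A : Type*} [CommRing R] [Ring A] [Algebra R A]
    (f g : FreeAlgebra R X →ₐ[R] A) (I : TwoSidedIdeal A)
    (h : ∀ x, f (ι R x) - g (ι R x) ∈ I) (a : FreeAlgebra R X) : f a - g a ∈ I := by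
  induction a with
  | grade0 r => simp [AlgHom.commutes]
  | grade1 x => exact h x
  | mul a b ha hb =>
    have hsplit : f (a * b) - g (a * b) = (f a - g a) * f b + g a * (f b - g b) := by
      simp only [map_mul]
      noncomm_ring
    rw [hsplit]
    exact I.add_mem (I.mul_mem_right _ _ ha) (I.mul_mem_left _ _ hb)
  | add a b ha hb =>
    rw [map_add, map_add, add_sub_add_comm]
    exact I.add_mem ha hb

end FreeAlgebra

theorem presentation_transfer_general
    (R : Type*) [CommRing R] (X Xt : Type*) (P : Type*) [Ring P] [Algebra R P]
    (π : FreeAlgebra R X →ₐ[R] P) (πt : FreeAlgebra R Xt →ₐ[R] P)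
    (φ : FreeAlgebra R X →ₐ[R] FreeAlgebra R Xt)
    (φt : FreeAlgebra R Xt →ₐ[R] FreeAlgebra R X)
    (hφ : πt.comp φ = π) (hφt : π.comp φt = πt)
    (Rt : Set (FreeAlgebra R Xt))
    (hker : TwoSidedIdeal.ker πt = TwoSidedIdeal.span Rt) :
    TwoSidedIdeal.ker π =
      TwoSidedIdeal.span
        (φt '' Rt ∪
          {a : FreeAlgebra R X | ∃ x : X,
            a = FreeAlgebra.ι R x - φt (φ (FreeAlgebra.ι R x))}) := by
  set I := TwoSidedIdeal.span (φt '' Rt ∪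
    {a : FreeAlgebra R X | ∃ x : X, a = FreeAlgebra.ι R x - φt (φ (FreeAlgebra.ι R x))})
  have hφ' (a : FreeAlgebra R X) : πt (φ a) = π a := DFunLike.congr_fun hφ a
  have hφt' (b : FreeAlgebra R Xt) : π (φt b) = πt b := DFunLike.congr_fun hφt b
  have hIπ : I ≤ TwoSidedIdeal.ker π := by
    refine TwoSidedIdeal.span_le.2 ?_
    rintro _ (⟨r, hr, rfl⟩ | ⟨x, rfl⟩)
    · have hr' : r ∈ TwoSidedIdeal.ker πt := hker ▸ TwoSidedIdeal.subset_span hr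
      rw [SetLike.mem_coe, TwoSidedIdeal.mem_ker, hφt']
      exact (TwoSidedIdeal.mem_ker πt).1 hr'
    · rw [SetLike.mem_coe, TwoSidedIdeal.mem_ker, map_sub, hφt', hφ', sub_self]
  have hsub (a : FreeAlgebra R X) : a - φt (φ a) ∈ I :=
    FreeAlgebra.sub_mem_of_forall_ι_sub_mem (AlgHom.id R _) (φt.comp φ) I
      (fun x => TwoSidedIdeal.subset_span (Or.inr ⟨x, rfl⟩)) a
  exact TwoSidedIdeal.ker_eq_of_le_of_sub_mem (π := π.toRingHom) (πt := πt.toRingHom)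
    (φ := φ.toRingHom) (φt := φt.toRingHom) hφ' hker hIπ
    (fun _ hb => TwoSidedIdeal.subset_span (Or.inl hb)) hsub

/-- Explicit presentation transfer: if `ker π̃` is the two-sided ideal generated by `R̃`,
then `ker π` is the two-sided ideal generated by `φ̃(R̃) ∪ {ι x - φ̃(φ(ι x))}`. -/
theorem presentation_transfer
    (R : Type*) [CommRing R] (X Xt : Type*) (P : Type*) [Ring P] [Algebra R P]
    (π : FreeAlgebra R X →ₐ[R] P) (πt : FreeAlgebra R Xt →ₐ[R] P)
    (hπ : Function.Surjective π) (hπt : Function.Surjective πt)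
    (φ : FreeAlgebra R X →ₐ[R] FreeAlgebra R Xt)
    (φt : FreeAlgebra R Xt →ₐ[R] FreeAlgebra R X)
    (hφ : πt.comp φ = π) (hφt : π.comp φt = πt)
    (Rt : Set (FreeAlgebra R Xt))
    (hker : TwoSidedIdeal.ker πt = TwoSidedIdeal.span Rt) :
    TwoSidedIdeal.ker π =
      TwoSidedIdeal.span
        (φt '' Rt ∪
          {a : FreeAlgebra R X | ∃ x : X,
            a = FreeAlgebra.ι R x - φt (φ (FreeAlgebra.ι R x))}) :=
  presentation_transfer_general R X Xt P π πt φ φt hφ hφt Rt hker
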